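/- arXiv:1208.3546 — 11 statements merged into one kernel-verified Lean document; each statement's English description precedes it below -/
import Mathlib

section
/- If real numbers d_1,...,d_s satisfy sum_{i=1}^s d_i * [1 + exp(-(x - μ_i)/σ_i)]^{-1} = 0 for all real x, where the pairs (μ_i, σ_i) are pairwise distinct and all σ_i > 0, then d_i = 0 for all i. -/
open Complex Filter Set Finset Topology
open scoped Real

/-!
Extend the combination to the function `F z = ∑ i, dᵢ (1 + exp (-(z - μᵢ) / σᵢ))⁻¹` on `ℂ`.
The `i`-th denominator vanishes only at the points `μᵢ + (2n + 1) π σᵢ I`. If `σⱼ` is minimal among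
the indices with `dⱼ ≠ 0`, then `F` is analytic on the strip `|Im z| < π σⱼ` and, vanishing on the
real line, vanishes on the whole strip. At the boundary point `p = μⱼ + π σⱼ I` the `j`-th
denominator vanishes, while every other term is continuous there because the parameter pairs are
distinct. Multiplying `F = 0` by the `j`-th denominator and letting `z → p` inside the strip
gives `dⱼ = 0`.
-/

namespace Complex

theorem exists_int_eq_of_one_add_exp_eq_zero {w : ℂ} (h : 1 + exp w = 0) :
    ∃ n : ℤ, w = π * I + n * (2 * π * I) := by
  rw [← exp_eq_exp_iff_exists_int, exp_pi_mul_I]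
  linear_combination h

theorem one_add_exp_neg_sub_div_ne_zero {μ σ : ℝ} {z : ℂ} (hσ : 0 < σ)
    (h : z.re ≠ μ ∨ |z.im| < π * σ) : 1 + exp (-(z - μ) / σ) ≠ 0 := by
  intro h0
  obtain ⟨n, hn⟩ := exists_int_eq_of_one_add_exp_eq_zero h0
  have hσ' : (σ : ℂ) ≠ 0 := by exact_mod_cast hσ.ne'
  have hz : z = μ - σ * (π * I + n * (2 * π * I)) := by
    rw [← hn]; field_simp; ring
  rcases h with h | h
  · exact h (by simp [hz])
  · have hn1 : (1 : ℝ) ≤ |2 * (n : ℝ) + 1| := by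
      exact_mod_cast Int.one_le_abs (by omega : 2 * n + 1 ≠ 0)
    have him : |z.im| = |2 * (n : ℝ) + 1| * (π * σ) := by
      have : z.im = -((2 * n + 1) * (π * σ)) := by simp [hz]; ring
      rw [this, abs_neg, abs_mul, abs_of_pos (mul_pos Real.pi_pos hσ)]
    rw [him] at h
    nlinarith [mul_pos Real.pi_pos hσ]

theorem eqOn_zero_of_analyticOnNhd_strip {f : ℂ → ℂ} {a : ℝ}
    (hf : AnalyticOnNhd ℂ f (im ⁻¹' Ioo (-a) a)) (h : ∀ x : ℝ, f x = 0) :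
    EqOn f 0 (im ⁻¹' Ioo (-a) a) := by
  intro z hz
  have ha : 0 < a := neg_lt_self_iff.mp (hz.1.trans hz.2)
  have h0 : (0 : ℂ) ∈ im ⁻¹' Ioo (-a) a := by simp [ha]
  have hreal : Tendsto ((↑) : ℝ → ℂ) (𝓝[≠] 0) (𝓝[≠] 0) := by
    simpa using continuous_ofReal.continuousWithinAt.tendsto_nhdsWithin
      (x := (0 : ℝ)) (t := {(0 : ℂ)}ᶜ) (fun x hx => by simpa using hx)
  exact hf.eqOn_zero_of_preconnected_of_frequently_eq_zero
    ((convex_Ioo (-a) a).linear_preimage imLm).isPreconnected h0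
    (hreal.frequently (Frequently.of_forall h)) hz

end Complex

noncomputable def complexLogistic (μ σ : ℝ) (z : ℂ) : ℂ := (1 + exp (-(z - μ) / σ))⁻¹

theorem complexLogistic_ofReal (μ σ x : ℝ) :
    complexLogistic μ σ x = ((1 + Real.exp (-(x - μ) / σ))⁻¹ : ℝ) := by
  simp [complexLogistic]

theorem differentiableAt_complexLogistic {μ σ : ℝ} {z : ℂ} (hσ : 0 < σ)
    (hz : z.re ≠ μ ∨ |z.im| < π * σ) : DifferentiableAt ℂ (complexLogistic μ σ) z :=
  (by fun_prop : DifferentiableAt ℂ (fun w : ℂ => 1 + exp (-(w - μ) / σ)) z).inv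
    (one_add_exp_neg_sub_div_ne_zero hσ hz)

theorem differentiableAt_const_mul_complexLogistic {d μ σ : ℝ} {z : ℂ}
    (h : d ≠ 0 → 0 < σ ∧ (z.re ≠ μ ∨ |z.im| < π * σ)) :
    DifferentiableAt ℂ (fun w => (d : ℂ) * complexLogistic μ σ w) z := by
  obtain rfl | hd := eq_or_ne d 0
  · simp
  obtain ⟨hσ, hz⟩ := h hd
  exact (differentiableAt_complexLogistic hσ hz).const_mul _

section

variable {ι : Type*} [Fintype ι] {d μ σ : ι → ℝ}

theorem analyticOnNhd_sum_complexLogistic {c : ℝ} (hc : ∀ i, d i ≠ 0 → c ≤ σ i) :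
    AnalyticOnNhd ℂ (fun z => ∑ i, (d i : ℂ) * complexLogistic (μ i) (σ i) z)
      (im ⁻¹' Ioo (-(π * c)) (π * c)) := by
  refine DifferentiableOn.analyticOnNhd (fun z hz => DifferentiableAt.differentiableWithinAt ?_)
    (isOpen_Ioo.preimage continuous_im)
  have hz' : |z.im| < π * c := abs_lt.2 hz
  have hc0 : 0 < c := pos_of_mul_pos_right ((abs_nonneg _).trans_lt hz') Real.pi_pos.le
  refine DifferentiableAt.fun_sum fun i _ => differentiableAt_const_mul_complexLogistic fun hd => ?_
  exact ⟨hc0.trans_le (hc i hd), Or.inr (hz'.trans_le (by gcongr; exact hc i hd))⟩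

theorem coeff_eq_zero_of_sum_complexLogistic_eqOn_zero [DecidableEq ι] {j : ι} (hσj : 0 < σ j)
    (hmin : ∀ i, d i ≠ 0 → σ j ≤ σ i) (hne : ∀ i, i ≠ j → (μ i, σ i) ≠ (μ j, σ j))
    (h : EqOn (fun z => ∑ i, (d i : ℂ) * complexLogistic (μ i) (σ i) z) 0
      (im ⁻¹' Ioo (-(π * σ j)) (π * σ j))) :
    d j = 0 := by
  set S := im ⁻¹' Ioo (-(π * σ j)) (π * σ j)
  set p : ℂ := μ j + π * σ j * I
  set g : ℂ → ℂ := fun z => 1 + exp (-(z - μ j) / σ j)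
  set r : ℂ → ℂ := fun z => ∑ i ∈ univ.erase j, (d i : ℂ) * complexLogistic (μ i) (σ i) z
  have hπσ : 0 < π * σ j := mul_pos Real.pi_pos hσj
  have hgp : g p = 0 := by
    have hσj' : (σ j : ℂ) ≠ 0 := by exact_mod_cast hσj.ne'
    have : -(p - μ j) / σ j = -(π * I) := by
      simp only [p]; field_simp; ring
    simp only [g]
    rw [this, exp_neg, exp_pi_mul_I]
    norm_num
  have hr : ContinuousAt r p := by
    refine (DifferentiableAt.fun_sum fun i hi => differentiableAt_const_mul_complexLogistic
      fun hd => ⟨hσj.trans_le (hmin i hd), ?_⟩).continuousAt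
    have hp_re : p.re = μ j := by simp [p]
    have hp_im : |p.im| = π * σ j := by simp [p, abs_of_pos hπσ]
    rw [hp_re, hp_im]
    by_contra! hcon
    obtain ⟨hμ, hσ⟩ := hcon
    have hσle := le_of_mul_le_mul_left hσ Real.pi_pos
    exact hne i (ne_of_mem_erase hi) (Prod.ext hμ.symm (le_antisymm hσle (hmin i hd)))
  have hF : MapsTo (fun z => (d j : ℂ) + g z * r z) S {0} := by
    intro z hz
    have hgz : g z ≠ 0 := one_add_exp_neg_sub_div_ne_zero hσj (Or.inr (abs_lt.2 hz))
    have hsum := h hz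
    simp only [← add_sum_erase _ _ (mem_univ j), Pi.zero_apply] at hsum
    calc (d j : ℂ) + g z * r z
        = g z * ((d j : ℂ) * complexLogistic (μ j) (σ j) z + r z) := by
          rw [show complexLogistic (μ j) (σ j) z = (g z)⁻¹ from rfl, mul_add, mul_left_comm,
            mul_inv_cancel₀ hgz, mul_one]
      _ = 0 := by rw [hsum, mul_zero]
  have hpS : p ∈ closure S := by
    rw [closure_preimage_im, closure_Ioo (by linarith)]
    simp [p, hπσ.le]
  have hFp : ContinuousAt (fun z => (d j : ℂ) + g z * r z) p :=
    continuousAt_const.add ((by fun_prop : ContinuousAt g p).mul hr)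
  simpa [hgp] using hFp.continuousWithinAt.mem_closure hpS hF

end

theorem logistic_combination_zero_of_distinct_params
    (s : ℕ) (d μ σ : Fin s → ℝ)
    (hσ : ∀ i, 0 < σ i)
    (hdist : Function.Injective (fun i => (μ i, σ i)))
    (h : ∀ x : ℝ, ∑ i, d i * (1 + Real.exp (-(x - μ i) / σ i))⁻¹ = 0) :
    ∀ i, d i = 0 := by
  by_contra! ⟨i₀, hi₀⟩
  obtain ⟨j, hj, hmin⟩ := ({i | d i ≠ 0} : Finset (Fin s)).exists_min_image σ ⟨i₀, by simpa⟩
  simp only [Finset.mem_filter, Finset.mem_univ, true_and] at hj hmin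
  have hreal : ∀ x : ℝ, ∑ i, (d i : ℂ) * complexLogistic (μ i) (σ i) x = 0 := fun x => by
    simpa [complexLogistic_ofReal] using congrArg ((↑) : ℝ → ℂ) (h x)
  exact hj <| coeff_eq_zero_of_sum_complexLogistic_eqOn_zero (hσ j) hmin
    (fun i hi => hdist.ne hi)
    (eqOn_zero_of_analyticOnNhd_strip (analyticOnNhd_sum_complexLogistic hmin) hreal)
end

section
/- If real numbers d_1,...,d_s satisfy sum_{i=1}^s d_i / (1 + exp(-(x - μ_i)/σ)) = 0 identically in x ∈ ℝ, where σ > 0 is a common scale and μ_1,...,μ_s are pairwise distinct reals, then all d_i = 0. -/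
/-!
Substituting `x = σ log t` for `t > 0` turns the logistic terms into `t / (t + a i)` with
`a i = exp (μ i / σ)`, so `∑ i, d i / (t + a i)` vanishes on `(0, ∞)`. Clearing denominators gives
a polynomial with infinitely many roots, hence zero; evaluating it at `-a j` isolates `d j`, because
the `a i` are distinct.
-/

open Polynomial Finset

section PartialFractions

variable {K ι : Type*} [Field K] [Fintype ι] [DecidableEq ι]

/-- The numerator of `∑ i, d i / (X + a i)` over the common denominator `∏ i, (X + a i)`. -/
noncomputable def clearedNumerator (d a : ι → K) : K[X] :=
  ∑ i, C (d i) * ∏ k ∈ univ.erase i, (X + C (a k))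

theorem eval_clearedNumerator (d a : ι → K) (t : K) :
    (clearedNumerator d a).eval t = ∑ i, d i * ∏ k ∈ univ.erase i, (t + a k) := by
  simp [clearedNumerator, eval_finsetSum, eval_prod]

theorem eval_clearedNumerator_eq_sum_div_mul_prod (d a : ι → K) {t : K}
    (ht : ∀ i, t + a i ≠ 0) :
    (clearedNumerator d a).eval t = (∑ i, d i / (t + a i)) * ∏ k, (t + a k) := by
  rw [eval_clearedNumerator, sum_mul]
  refine sum_congr rfl fun i _ => ?_
  rw [← mul_prod_erase univ _ (mem_univ i)]
  field_simp [ht i]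

theorem eval_clearedNumerator_neg (d a : ι → K) (j : ι) :
    (clearedNumerator d a).eval (-a j) = d j * ∏ k ∈ univ.erase j, (a k - a j) := by
  rw [eval_clearedNumerator, sum_eq_single j]
  · simp only [neg_add_eq_sub]
  · intro i _ hij
    refine mul_eq_zero_of_right _ (prod_eq_zero (mem_erase.2 ⟨Ne.symm hij, mem_univ j⟩) ?_)
    ring
  · exact fun hj => absurd (mem_univ j) hj

theorem eq_zero_of_sum_div_add_eq_zero {a : ι → K} (ha : Function.Injective a) {d : ι → K}
    {S : Set K} (hS : S.Infinite) (h : ∀ t ∈ S, ∑ i, d i / (t + a i) = 0) (j : ι) : d j = 0 := by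
  have hroots : S \ Set.range (fun i => -a i) ⊆ {t | (clearedNumerator d a).IsRoot t} := by
    rintro t ⟨htS, htpole⟩
    have hne : ∀ i, t + a i ≠ 0 := fun i hi =>
      htpole ⟨i, (eq_neg_of_add_eq_zero_left hi).symm⟩
    simp [IsRoot, eval_clearedNumerator_eq_sum_div_mul_prod d a hne, h t htS]
  have hzero : clearedNumerator d a = 0 :=
    eq_zero_of_infinite_isRoot _ ((hS.sdiff (Set.finite_range _)).mono hroots)
  have hprod : ∏ k ∈ univ.erase j, (a k - a j) ≠ 0 :=
    prod_ne_zero_iff.2 fun k hk => sub_ne_zero.2 fun hkj => (mem_erase.1 hk).1 (ha hkj)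
  have hev := eval_clearedNumerator_neg d a j
  rw [hzero, eval_zero] at hev
  exact (mul_eq_zero.1 hev.symm).resolve_right hprod

end PartialFractions

theorem one_add_exp_neg_div_log {σ : ℝ} (hσ : σ ≠ 0) (m : ℝ) {t : ℝ} (ht : 0 < t) :
    1 + Real.exp (-(σ * Real.log t - m) / σ) = (t + Real.exp (m / σ)) / t := by
  have hexp : -(σ * Real.log t - m) / σ = m / σ - Real.log t := by
    field_simp
    ring
  rw [hexp, Real.exp_sub, Real.exp_log ht]
  field_simp

theorem logistic_combination_zero_common_scale
    (s : ℕ) (d μ : Fin s → ℝ) (σ : ℝ)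
    (hσ : 0 < σ)
    (hμ : Function.Injective μ)
    (h : ∀ x : ℝ, ∑ i, d i / (1 + Real.exp (-(x - μ i) / σ)) = 0) :
    ∀ i, d i = 0 := by
  have hinj : Function.Injective fun i => Real.exp (μ i / σ) := fun i j hij =>
    hμ ((div_left_inj' hσ.ne').1 (Real.exp_injective hij))
  refine eq_zero_of_sum_div_add_eq_zero hinj (Set.Ioi_infinite 0) fun t (ht : 0 < t) => ?_
  have hx := h (σ * Real.log t)
  simp only [one_add_exp_neg_div_log hσ.ne' _ ht, div_div_eq_mul_div, mul_div_right_comm _ t,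
    ← sum_mul] at hx
  exact (mul_eq_zero.1 hx).resolve_right ht.ne'
end

section
/- Let σ_1,...,σ_s > 0 with σ_1 = ... = σ_k < σ_{k+1} ≤ ... ≤ σ_s, and let μ_1,...,μ_k be pairwise distinct. If sum_{i=1}^s d_i / (1 + exp((x - μ_i)/σ_i)) = 0 for all x ∈ ℝ, then sum_{i=1}^k d_i exp(j μ_i/σ_i) = 0 for j = 1,...,k, and consequently d_1 = ... = d_k = 0. -/
open Complex Filter Topology Finset

theorem logistic_smallest_scale_coeffs_zero
    (s k : ℕ) (hk : 1 ≤ k) (hks : k ≤ s)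
    (d μ σ : Fin s → ℝ)
    (hσ : ∀ i, 0 < σ i)
    (heq : ∀ i j : Fin s, (i : ℕ) < k → (j : ℕ) < k → σ i = σ j)
    (hlt : ∀ i j : Fin s, (i : ℕ) < k → k ≤ (j : ℕ) → σ i < σ j)
    (hmono : ∀ i j : Fin s, k ≤ (i : ℕ) → i ≤ j → σ i ≤ σ j)
    (hμ : ∀ i j : Fin s, (i : ℕ) < k → (j : ℕ) < k → i ≠ j → μ i ≠ μ j)
    (h : ∀ x : ℝ, ∑ i, d i / (1 + Real.exp ((x - μ i) / σ i)) = 0) :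
    (∀ j : ℕ, 1 ≤ j → j ≤ k →
      ∑ i ∈ Finset.univ.filter (fun i : Fin s => (i : ℕ) < k),
        d i * Real.exp (j * μ i / σ i) = 0) ∧
    (∀ i : Fin s, (i : ℕ) < k → d i = 0) := by
  have main : ∀ i : Fin s, (i : ℕ) < k → d i = 0 := by
    set F : ℂ → ℂ := fun z => ∑ i, (d i : ℂ) / (1 + Complex.exp ((z - (μ i : ℂ)) / (σ i : ℂ)))
      with hFdef
    set U : Set ℂ := {z | ∀ i, 1 + Complex.exp ((z - (μ i : ℂ)) / (σ i : ℂ)) ≠ 0} with hUdef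
    have hσ0 : ∀ i, (σ i : ℂ) ≠ 0 := fun i => by
      exact_mod_cast (hσ i).ne'
    -- U is open
    have hUopen : IsOpen U := by
      have : U = ⋂ i, (fun z => 1 + Complex.exp ((z - (μ i : ℂ)) / (σ i : ℂ))) ⁻¹' {0}ᶜ := by
        ext z; simp [hUdef, Set.mem_iInter]
      rw [this]
      refine isOpen_iInter_of_finite fun i => ?_
      exact (isOpen_compl_singleton).preimage (by fun_prop)
    -- complement of U is countable
    have hUcc : Set.Countable Uᶜ := by
      have : Uᶜ ⊆ ⋃ i : Fin s, ⋃ n : ℤ,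
          {(μ i : ℂ) + (σ i : ℂ) * (Real.pi * I + n * (2 * Real.pi * I))} := by
        intro z hz
        simp only [hUdef, Set.mem_compl_iff, Set.mem_setOf_eq, not_forall, not_not] at hz
        obtain ⟨i, hi⟩ := hz
        have hexp : Complex.exp ((z - (μ i : ℂ)) / (σ i : ℂ)) = Complex.exp (Real.pi * I) := by
          rw [Complex.exp_pi_mul_I]; linear_combination hi
        rw [Complex.exp_eq_exp_iff_exists_int] at hexp
        obtain ⟨n, hn⟩ := hexp
        refine Set.mem_iUnion.2 ⟨i, Set.mem_iUnion.2 ⟨n, ?_⟩⟩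
        have hn' : z = (μ i : ℂ) + (σ i : ℂ) * (Real.pi * I + n * (2 * Real.pi * I)) := by
          have hσi := hσ0 i
          field_simp at hn
          linear_combination hn
        exact hn'
      exact Set.Countable.mono this
        (Set.countable_iUnion fun i => Set.countable_iUnion fun n => Set.countable_singleton _)
    -- U is preconnected
    have hUconn : IsPreconnected U := by
      have := hUcc.isConnected_compl_of_one_lt_rank
        (Complex.rank_real_complex ▸ Nat.one_lt_ofNat)
      rw [compl_compl] at this
      exact this.isPreconnected
    -- real points belong to U and F vanishes there
    have hrealU : ∀ x : ℝ, (x : ℂ) ∈ U := by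
      intro x i
      have : ((x : ℂ) - (μ i : ℂ)) / (σ i : ℂ) = (((x - μ i) / σ i : ℝ) : ℂ) := by push_cast; ring
      rw [this, ← Complex.ofReal_exp, ← Complex.ofReal_one, ← Complex.ofReal_add]
      exact_mod_cast (by positivity : (0:ℝ) < 1 + Real.exp ((x - μ i)/ σ i)).ne'
    have hFreal : ∀ x : ℝ, F (x : ℂ) = 0 := by
      intro x
      have hx := h x
      rw [hFdef]
      have : ∀ i : Fin s, (d i : ℂ) / (1 + Complex.exp (((x:ℂ) - (μ i : ℂ)) / (σ i : ℂ)))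
          = ((d i / (1 + Real.exp ((x - μ i) / σ i)) : ℝ) : ℂ) := by
        intro i
        have : ((x : ℂ) - (μ i : ℂ)) / (σ i : ℂ) = (((x - μ i) / σ i : ℝ) : ℂ) := by
          push_cast; ring
        rw [this, ← Complex.ofReal_exp]; norm_cast
      simp only [this, ← Complex.ofReal_sum, hx, Complex.ofReal_zero]
    -- F is analytic on U
    have hterm : ∀ i : Fin s, DifferentiableOn ℂ
        (fun z => (d i : ℂ) / (1 + Complex.exp ((z - (μ i:ℂ)) / (σ i:ℂ)))) U := by
      intro i
      apply DifferentiableOn.div (differentiableOn_const _)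
      · apply DifferentiableOn.const_add
        apply DifferentiableOn.cexp
        apply DifferentiableOn.div_const
        exact differentiableOn_id.sub (differentiableOn_const _)
      · exact fun z hz => hz i
    have hFan : AnalyticOnNhd ℂ F U :=
      (DifferentiableOn.fun_sum fun i _ => hterm i).analyticOnNhd hUopen
    -- F vanishes frequently near 0
    have hfreq : ∃ᶠ z in 𝓝[≠] (0:ℂ), F z = 0 := by
      have htend : Tendsto (fun t : ℝ => (t:ℂ)) (𝓝[>] (0:ℝ)) (𝓝[≠] (0:ℂ)) := by
        rw [tendsto_nhdsWithin_iff]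
        constructor
        · have h1 : Tendsto (fun t : ℝ => (t:ℂ)) (𝓝 (0:ℝ)) (𝓝 ((0:ℝ):ℂ)) :=
            Complex.continuous_ofReal.tendsto 0
          rw [Complex.ofReal_zero] at h1
          exact h1.mono_left nhdsWithin_le_nhds
        · filter_upwards [self_mem_nhdsWithin] with t ht
          simp only [Set.mem_compl_iff, Set.mem_singleton_iff]
          exact_mod_cast (ne_of_gt ht)
      exact htend.frequently (Frequently.of_forall fun t => hFreal t)
    have hFzero : Set.EqOn F 0 U :=
      hFan.eqOn_zero_of_preconnected_of_frequently_eq_zero hUconn (hrealU 0) hfreq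
    -- now the pole argument
    intro i₀ hi₀
    set z₀ : ℂ := (μ i₀ : ℂ) + Real.pi * σ i₀ * I with hz₀def
    -- other denominators are nonzero at z₀
    have hne : ∀ j : Fin s, j ≠ i₀ → 1 + Complex.exp ((z₀ - (μ j : ℂ)) / (σ j : ℂ)) ≠ 0 := by
      intro j hj hcontra
      have hexp : Complex.exp ((z₀ - (μ j : ℂ)) / (σ j : ℂ)) = Complex.exp (Real.pi * I) := by
        rw [Complex.exp_pi_mul_I]; linear_combination hcontra
      rw [Complex.exp_eq_exp_iff_exists_int] at hexp
      obtain ⟨n, hn⟩ := hexp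
      have hn' : z₀ - (μ j : ℂ) = (σ j : ℂ) * (Real.pi * I + n * (2 * Real.pi * I)) := by
        have hσj := hσ0 j
        field_simp at hn; linear_combination hn
      rw [hz₀def] at hn'
      have hre : μ i₀ - μ j = 0 := by
        have := congrArg Complex.re hn'
        simpa using this
      have him : Real.pi * σ i₀ = σ j * (Real.pi + n * (2 * Real.pi)) := by
        have := congrArg Complex.im hn'
        simpa using this
      have him' : σ i₀ = σ j * (2 * (n:ℝ) + 1) := by
        have hπ := Real.pi_pos
        nlinarith [him]
      by_cases hjk : (j : ℕ) < k
      · exact hμ i₀ j hi₀ hjk (fun e => hj e.symm) (by linarith [hre])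
      · have hσj : σ i₀ < σ j := hlt i₀ j hi₀ (le_of_not_gt hjk)
        have hσjpos := hσ j
        have hσipos := hσ i₀
        -- σ i₀ = σ j (2n+1), with 0 < σ i₀ < σ j forces 0 < 2n+1 < 1, impossible for integers
        have h1 : (0:ℝ) < 2 * (n:ℝ) + 1 := by nlinarith
        have h2 : 2 * (n:ℝ) + 1 < 1 := by nlinarith
        have : (0:ℤ) < 2 * n + 1 := by exact_mod_cast (by push_cast; linarith : (0:ℝ) < ((2*n+1 : ℤ):ℝ))
        have : (2*n+1 : ℤ) < 1 := by exact_mod_cast (by push_cast; linarith : ((2*n+1 : ℤ):ℝ) < 1)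
        omega
    -- the i₀ denominator as a function of real t > 0
    have hdenomi₀ : ∀ t : ℝ, (z₀ + (t:ℂ) - (μ i₀ : ℂ)) / (σ i₀ : ℂ)
        = ((t / σ i₀ : ℝ) : ℂ) + Real.pi * I := by
      intro t
      have hσc := hσ0 i₀
      rw [hz₀def]
      push_cast
      field_simp
      ring
    have hdenomi₀' : ∀ t : ℝ, 1 + Complex.exp ((z₀ + (t:ℂ) - (μ i₀ : ℂ)) / (σ i₀ : ℂ))
        = 1 - ((Real.exp (t / σ i₀) : ℝ) : ℂ) := by
      intro t
      rw [hdenomi₀, Complex.exp_add, Complex.exp_pi_mul_I, ← Complex.ofReal_exp]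
      ring
    -- eventually z₀ + t ∈ U for t → 0+
    have hcont : ∀ j : Fin s, Continuous fun t : ℝ =>
        1 + Complex.exp ((z₀ + (t:ℂ) - (μ j : ℂ)) / (σ j : ℂ)) := by
      intro j; fun_prop
    have hmemU : ∀ᶠ t : ℝ in 𝓝[>] (0:ℝ), (z₀ + (t:ℂ)) ∈ U := by
      have : ∀ j : Fin s, ∀ᶠ t : ℝ in 𝓝[>] (0:ℝ),
          1 + Complex.exp ((z₀ + (t:ℂ) - (μ j : ℂ)) / (σ j : ℂ)) ≠ 0 := by
        intro j
        by_cases hj : j = i₀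
        · subst hj
          filter_upwards [self_mem_nhdsWithin] with t ht
          rw [hdenomi₀', sub_ne_zero]
          intro hc
          have hc' : Real.exp (t / σ j) = 1 := by exact_mod_cast hc.symm
          rw [Real.exp_eq_one_iff, div_eq_zero_iff] at hc'
          rcases hc' with h' | h'
          · exact absurd h' (ne_of_gt ht)
          · exact absurd h' (hσ j).ne'
        · have h0 : 1 + Complex.exp ((z₀ + ((0:ℝ):ℂ) - (μ j : ℂ)) / (σ j : ℂ)) ≠ 0 := by
            simpa using hne j hj
          have := (hcont j).continuousAt (x := (0:ℝ)) |>.eventually_ne h0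
          exact nhdsWithin_le_nhds this
      have := Filter.eventually_all.2 this
      filter_upwards [this] with t ht
      exact fun j => ht j
    -- combine: d i₀ equals a product tending to 0
    set g : ℝ → ℂ := fun t => (1 + Complex.exp ((z₀ + (t:ℂ) - (μ i₀ : ℂ)) / (σ i₀ : ℂ))) *
      (-(∑ j ∈ Finset.univ.erase i₀,
          (d j : ℂ) / (1 + Complex.exp ((z₀ + (t:ℂ) - (μ j : ℂ)) / (σ j : ℂ))))) with hgdef
    have hgeq : ∀ᶠ t : ℝ in 𝓝[>] (0:ℝ), g t = (d i₀ : ℂ) := by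
      filter_upwards [hmemU, self_mem_nhdsWithin] with t htU htpos
      have hF0 := hFzero htU
      simp only [hFdef, Pi.zero_apply] at hF0
      have hsplit := Finset.add_sum_erase Finset.univ
        (fun j => (d j : ℂ) / (1 + Complex.exp ((z₀ + (t:ℂ) - (μ j : ℂ)) / (σ j : ℂ))))
        (Finset.mem_univ i₀)
      rw [← hsplit] at hF0
      have hd0 : 1 + Complex.exp ((z₀ + (t:ℂ) - (μ i₀ : ℂ)) / (σ i₀ : ℂ)) ≠ 0 := htU i₀
      simp only [hgdef]
      have : (d i₀ : ℂ) / (1 + Complex.exp ((z₀ + (t:ℂ) - (μ i₀ : ℂ)) / (σ i₀ : ℂ)))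
          = -(∑ j ∈ Finset.univ.erase i₀,
              (d j : ℂ) / (1 + Complex.exp ((z₀ + (t:ℂ) - (μ j : ℂ)) / (σ j : ℂ)))) := by
        linear_combination hF0
      rw [← this, mul_div_cancel₀ _ hd0]
    -- g tends to 0
    have hgzero : Tendsto g (𝓝[>] (0:ℝ)) (𝓝 0) := by
      have h1 : Tendsto (fun t : ℝ => 1 + Complex.exp ((z₀ + (t:ℂ) - (μ i₀ : ℂ)) / (σ i₀ : ℂ)))
          (𝓝[>] (0:ℝ)) (𝓝 0) := by
        have := ((hcont i₀).tendsto 0)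
        have h0 : 1 + Complex.exp ((z₀ + ((0:ℝ):ℂ) - (μ i₀ : ℂ)) / (σ i₀ : ℂ)) = 0 := by
          rw [hdenomi₀']
          simp
        rw [h0] at this
        exact this.mono_left nhdsWithin_le_nhds
      have h2 : Tendsto (fun t : ℝ => -(∑ j ∈ Finset.univ.erase i₀,
          (d j : ℂ) / (1 + Complex.exp ((z₀ + (t:ℂ) - (μ j : ℂ)) / (σ j : ℂ)))))
          (𝓝[>] (0:ℝ)) (𝓝 (-(∑ j ∈ Finset.univ.erase i₀,
          (d j : ℂ) / (1 + Complex.exp ((z₀ + ((0:ℝ):ℂ) - (μ j : ℂ)) / (σ j : ℂ)))))) := by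
        refine Tendsto.neg (tendsto_finset_sum _ fun j hj => ?_)
        have hjne : j ≠ i₀ := Finset.ne_of_mem_erase hj
        have hd0 : 1 + Complex.exp ((z₀ + ((0:ℝ):ℂ) - (μ j : ℂ)) / (σ j : ℂ)) ≠ 0 := by
          simpa using hne j hjne
        exact Tendsto.div tendsto_const_nhds
          (((hcont j).tendsto 0).mono_left nhdsWithin_le_nhds) hd0
      have := h1.mul h2
      rw [zero_mul] at this
      exact this
    have : (d i₀ : ℂ) = 0 := by
      have hconst : Tendsto g (𝓝[>] (0:ℝ)) (𝓝 (d i₀ : ℂ)) :=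
        Tendsto.congr' (hgeq.mono fun t ht => ht.symm) tendsto_const_nhds
      exact tendsto_nhds_unique hconst hgzero
    exact_mod_cast this
  refine ⟨?_, main⟩
  intro j hj1 hjk
  refine Finset.sum_eq_zero fun i hi => ?_
  rw [main i (Finset.mem_filter.mp hi).2, zero_mul]
end

section
/- Fix p ≥ 1 and a scale vector Σ = (σ^1,...,σ^p) with each σ^k > 0. If sum_{i=1}^s d_i * [1 + sum_{k=1}^p exp(-(x_k - μ_i^k)/σ^k)]^{-1} = 0 for all (x_1,...,x_p) ∈ ℝ^p, where μ_1,...,μ_s ∈ ℝ^p are pairwise distinct, then d_i = 0 for all i. -/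
/-!
Write `exp (-(x_k - μ_i^k) / σ^k) = exp (-x_k / σ^k) · c_i^k` with `c_i^k = exp (μ_i^k / σ^k)`.
Along the ray `exp (-x_k / σ^k) = u · y^k` (`u > 0`) the `i`-th logistic cdf becomes
`1 / (1 + a_i u)` with `a_i = ∑_k c_i^k y^k > 0`. The polynomials `∑_k c_i^k Y^k` are pairwise
distinct, so their pairwise differences have finitely many roots and some `y > 0` makes the `a_i`
distinct. Clearing denominators in `∑ d_i / (1 + a_i u) = 0` gives a polynomial vanishing for all
`u > 0`, hence identically; evaluating it at the pole `u = -1 / a_i` isolates `d_i`.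
-/

open Polynomial Finset

namespace Polynomial

theorem exists_mem_injective_eval {R ι : Type*} [CommRing R] [IsDomain R] [Finite ι]
    {P : ι → R[X]} (hP : Function.Injective P) {S : Set R} (hS : S.Infinite) :
    ∃ y ∈ S, Function.Injective fun i ↦ (P i).eval y := by
  set B := ⋃ (i) (j) (_ : i ≠ j), {y | (P i - P j).IsRoot y}
  have hB : B.Finite :=
    Set.finite_iUnion fun i ↦ Set.finite_iUnion fun j ↦ Set.finite_iUnion fun hij ↦
      finite_setOfPred_isRoot (sub_ne_zero.mpr (hP.ne hij))
  obtain ⟨y, hyS, hyB⟩ := (hS.sdiff hB).nonempty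
  refine ⟨y, hyS, fun i j hij ↦ by_contra fun hne ↦ hyB ?_⟩
  simp only [B, Set.mem_iUnion]
  exact ⟨i, j, hne, by simpa [sub_eq_zero] using hij⟩

theorem eval_ofFn {R : Type*} [Semiring R] [DecidableEq R] {n : ℕ} (v : Fin n → R) (y : R) :
    (ofFn n v).eval y = ∑ k, v k * y ^ (k : ℕ) := by
  simp only [ofFn_eq_sum_monomial, eval_finsetSum, eval_monomial]

end Polynomial

section PartialFractions

variable {K ι : Type*} [Field K] [Fintype ι] [DecidableEq ι]

theorem prod_erase_one_add_mul_eq {a : ι → K} {u : K} (i : ι) (hi : 1 + a i * u ≠ 0) :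
    ∏ j ∈ univ.erase i, (1 + a j * u) = (1 + a i * u)⁻¹ * ∏ j, (1 + a j * u) := by
  rw [← mul_prod_erase univ _ (mem_univ i), inv_mul_cancel_left₀ hi]

theorem prod_erase_one_add_mul_neg_inv_ne_zero {a : ι → K} (ha : ∀ i, a i ≠ 0)
    (hinj : Function.Injective a) (i : ι) :
    ∏ j ∈ univ.erase i, (1 + a j * -(a i)⁻¹) ≠ 0 := by
  refine prod_ne_zero_iff.mpr fun j hj hzero ↦ (ne_of_mem_erase hj) (hinj ?_)
  field_simp [ha i] at hzero
  linear_combination -hzero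

theorem eq_zero_of_sum_mul_inv_one_add_mul_eq_zero {a : ι → K} (ha : ∀ i, a i ≠ 0)
    (hinj : Function.Injective a) {S : Set K} (hS : S.Infinite)
    (hden : ∀ u ∈ S, ∀ i, 1 + a i * u ≠ 0) {d : ι → K}
    (h : ∀ u ∈ S, ∑ i, d i * (1 + a i * u)⁻¹ = 0) (i : ι) : d i = 0 := by
  set Q : K[X] := ∑ i, C (d i) * ∏ j ∈ univ.erase i, (1 + C (a j) * X)
  have hQ_eval (u : K) : Q.eval u = ∑ i, d i * ∏ j ∈ univ.erase i, (1 + a j * u) := by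
    simp [Q, eval_finsetSum, eval_prod]
  have hQ_zero : Q = 0 := by
    refine eq_zero_of_infinite_isRoot Q (hS.mono fun u hu ↦ ?_)
    simp only [Set.mem_ofPred_eq, IsRoot, hQ_eval, prod_erase_one_add_mul_eq _ (hden u hu _),
      ← mul_assoc, ← sum_mul, h u hu, zero_mul]
  have hQ_pole : Q.eval (-(a i)⁻¹) = d i * ∏ j ∈ univ.erase i, (1 + a j * -(a i)⁻¹) := by
    rw [hQ_eval]
    refine sum_eq_single i (fun k _ hki ↦ ?_) (by simp)
    rw [prod_eq_zero (mem_erase.mpr ⟨Ne.symm hki, mem_univ i⟩), mul_zero]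
    field_simp [ha i]
    ring
  rw [hQ_zero, eval_zero, eq_comm, mul_eq_zero] at hQ_pole
  exact hQ_pole.resolve_right (prod_erase_one_add_mul_neg_inv_ne_zero ha hinj i)

end PartialFractions

theorem Real.exp_neg_div_neg_mul_log_sub {σ t : ℝ} (hσ : σ ≠ 0) (ht : 0 < t) (m : ℝ) :
    Real.exp (-(-σ * Real.log t - m) / σ) = t * Real.exp (m / σ) := by
  rw [show -(-σ * Real.log t - m) / σ = Real.log t + m / σ by field_simp; ring,
    Real.exp_add, Real.exp_log ht]

theorem multivariate_logistic_combination_zero_fixed_scale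
    (p s : ℕ) (hp : 1 ≤ p)
    (σ : Fin p → ℝ) (hσ : ∀ k, 0 < σ k)
    (d : Fin s → ℝ) (μ : Fin s → Fin p → ℝ)
    (hμ : Function.Injective μ)
    (h : ∀ x : Fin p → ℝ,
      ∑ i, d i * (1 + ∑ k, Real.exp (-(x k - μ i k) / σ k))⁻¹ = 0) :
    ∀ i, d i = 0 := by
  classical
  set c : Fin s → Fin p → ℝ := fun i k ↦ Real.exp (μ i k / σ k)
  have hc : Function.Injective c := fun i j hij ↦ hμ <| funext fun k ↦
    (div_left_inj' (hσ k).ne').mp (Real.exp_injective (congrFun hij k))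
  obtain ⟨y, hy, ha_inj⟩ :=
    exists_mem_injective_eval ((injective_ofFn p).comp hc) (Set.Ioi_infinite (0 : ℝ))
  set a : Fin s → ℝ := fun i ↦ (ofFn p (c i)).eval y
  have ha_pos (i : Fin s) : 0 < a i := by
    have : Nonempty (Fin p) := Fin.pos_iff_nonempty.mp hp
    simp only [a, eval_ofFn]
    exact sum_pos (fun k _ ↦ mul_pos (Real.exp_pos _) (pow_pos hy _)) univ_nonempty
  refine eq_zero_of_sum_mul_inv_one_add_mul_eq_zero (fun i ↦ (ha_pos i).ne') ha_inj
    (Set.Ioi_infinite 0) (fun u (hu : 0 < u) i ↦ (add_pos one_pos (mul_pos (ha_pos i) hu)).ne')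
    (fun u (hu : 0 < u) ↦ ?_)
  have hray (i : Fin s) :
      ∑ k, Real.exp (-(-σ k * Real.log (u * y ^ (k : ℕ)) - μ i k) / σ k) = a i * u := by
    simp only [a, eval_ofFn, sum_mul,
      Real.exp_neg_div_neg_mul_log_sub (hσ _).ne' (mul_pos hu (pow_pos hy _))]
    exact sum_congr rfl fun k _ ↦ by ring
  simpa only [hray] using h fun k ↦ -σ k * Real.log (u * y ^ (k : ℕ))
end

section
/- Let μ_1,...,μ_s ∈ ℝ^2 be pairwise distinct and σ^1, σ^2 > 0. Then there exists (y_1, y_2) ∈ ℝ^2 such that for all i ≠ j with μ_i ≠ μ_j: exp((y_1 + μ_i^1)/σ^1) + exp((y_2 + μ_i^2)/σ^2) ≠ exp((y_1 + μ_j^1)/σ^1) + exp((y_2 + μ_j^2)/σ^2). -/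
theorem exists_separating_shift
    (s : ℕ) (μ : Fin s → ℝ × ℝ) (σ₁ σ₂ : ℝ)
    (hσ₁ : 0 < σ₁) (hσ₂ : 0 < σ₂)
    (hμ : Function.Injective μ) :
    ∃ y₁ y₂ : ℝ, ∀ i j : Fin s, i ≠ j → μ i ≠ μ j →
      Real.exp ((y₁ + (μ i).1) / σ₁) + Real.exp ((y₂ + (μ i).2) / σ₂) ≠
      Real.exp ((y₁ + (μ j).1) / σ₁) + Real.exp ((y₂ + (μ j).2) / σ₂) := by
  set B : Fin s → Fin s → Set ℝ := fun i j =>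
    {y : ℝ | μ i ≠ μ j ∧
      Real.exp ((y + (μ i).1) / σ₁) + Real.exp ((0 + (μ i).2) / σ₂) =
      Real.exp ((y + (μ j).1) / σ₁) + Real.exp ((0 + (μ j).2) / σ₂)} with hB
  have hexp : ∀ (y a : ℝ), Real.exp ((y + a) / σ₁) =
      Real.exp (y / σ₁) * Real.exp (a / σ₁) := by
    intro y a
    rw [← Real.exp_add, ← add_div]
  have hfin : ∀ i j, (B i j).Finite := by
    intro i j
    by_cases hij : (μ i).1 = (μ j).1
    · -- B is empty
      convert Set.finite_empty
      ext y
      simp only [hB, Set.mem_setOf_eq, Set.mem_empty_iff_false, iff_false, not_and]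
      intro hne heq
      rw [hij] at heq
      have h2 : Real.exp ((0 + (μ i).2) / σ₂) = Real.exp ((0 + (μ j).2) / σ₂) := by
        linarith
      have := Real.exp_injective h2
      have h3 : (μ i).2 = (μ j).2 := by
        field_simp at this
        linarith
      exact hne (Prod.ext hij h3)
    · -- B is a subsingleton
      apply Set.Subsingleton.finite
      intro y hy y' hy'
      simp only [hB, Set.mem_setOf_eq] at hy hy'
      have C1 : Real.exp (y / σ₁) * (Real.exp ((μ i).1 / σ₁) - Real.exp ((μ j).1 / σ₁)) =
          Real.exp (y' / σ₁) * (Real.exp ((μ i).1 / σ₁) - Real.exp ((μ j).1 / σ₁)) := by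
        have h1 := hy.2
        have h2 := hy'.2
        rw [hexp, hexp] at h1 h2
        linear_combination h1 - h2
      have hC : Real.exp ((μ i).1 / σ₁) - Real.exp ((μ j).1 / σ₁) ≠ 0 := by
        intro h
        apply hij
        have := Real.exp_injective (by linarith : Real.exp ((μ i).1 / σ₁) = Real.exp ((μ j).1 / σ₁))
        field_simp at this
        linarith
      have := mul_right_cancel₀ hC C1
      have := Real.exp_injective this
      field_simp at this
      linarith
  have hBad : (⋃ i, ⋃ j, B i j).Finite := Set.finite_iUnion fun i => Set.finite_iUnion (hfin i)
  obtain ⟨y, hy⟩ := hBad.infinite_compl.nonempty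
  refine ⟨y, 0, fun i j _ hne heq => ?_⟩
  apply hy
  exact Set.mem_iUnion.mpr ⟨i, Set.mem_iUnion.mpr ⟨j, ⟨hne, heq⟩⟩⟩
end

section
/- Suppose for a fixed pair (a_1,b_1) ≠ (a_2,b_2) in ℝ^2 and positive σ^1, σ^2, the equality exp((y_1 + a_1)/σ^1) + exp((y_2 + b_1)/σ^2) = exp((y_1 + a_2)/σ^1) + exp((y_2 + b_2)/σ^2) holds along a double sequence (y_1^{h,k}, y_2^h) with y_2^h → ∞ and, for each fixed h, y_1^{h,k} → ∞ as k → ∞. Then a_1 = a_2 and b_1 = b_2, a contradiction. -/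
theorem no_persistent_equality_along_double_sequence
    (a₁ b₁ a₂ b₂ σ₁ σ₂ : ℝ)
    (hσ₁ : 0 < σ₁) (hσ₂ : 0 < σ₂)
    (hne : (a₁, b₁) ≠ (a₂, b₂))
    (y₁ : ℕ → ℕ → ℝ) (y₂ : ℕ → ℝ)
    (hy₂ : Filter.Tendsto y₂ Filter.atTop Filter.atTop)
    (hy₁ : ∀ h, Filter.Tendsto (y₁ h) Filter.atTop Filter.atTop)
    (heq : ∀ h k,
      Real.exp ((y₁ h k + a₁) / σ₁) + Real.exp ((y₂ h + b₁) / σ₂) =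
      Real.exp ((y₁ h k + a₂) / σ₁) + Real.exp ((y₂ h + b₂) / σ₂)) :
    False := by
  -- rewrite the equality in a product form
  have key : ∀ k, Real.exp (y₁ 0 k / σ₁) * (Real.exp (a₁ / σ₁) - Real.exp (a₂ / σ₁))
      = Real.exp ((y₂ 0 + b₂) / σ₂) - Real.exp ((y₂ 0 + b₁) / σ₂) := by
    intro k
    have h := heq 0 k
    have e1 : (y₁ 0 k + a₁) / σ₁ = y₁ 0 k / σ₁ + a₁ / σ₁ := by ring
    have e2 : (y₁ 0 k + a₂) / σ₁ = y₁ 0 k / σ₁ + a₂ / σ₁ := by ring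
    rw [e1, e2, Real.exp_add, Real.exp_add] at h
    linarith
  -- find k with y₁ 0 k > y₁ 0 0
  obtain ⟨K, hK⟩ := (Filter.tendsto_atTop.mp (hy₁ 0) (y₁ 0 0 + 1)).exists
  have hyne : y₁ 0 0 ≠ y₁ 0 K := by linarith
  have hd : Real.exp (a₁ / σ₁) - Real.exp (a₂ / σ₁) = 0 := by
    by_contra hd
    have := (key 0).trans (key K).symm
    have hexp : Real.exp (y₁ 0 0 / σ₁) = Real.exp (y₁ 0 K / σ₁) :=
      mul_right_cancel₀ hd this
    have := Real.exp_injective hexp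
    exact hyne (by field_simp at this; linarith)
  have ha : a₁ = a₂ := by
    have := Real.exp_injective (by linarith : Real.exp (a₁ / σ₁) = Real.exp (a₂ / σ₁))
    field_simp at this; linarith
  have hb : b₁ = b₂ := by
    have h := heq 0 0
    subst ha
    have hbe : Real.exp ((y₂ 0 + b₁) / σ₂) = Real.exp ((y₂ 0 + b₂) / σ₂) := by linarith
    have := Real.exp_injective hbe
    field_simp at this; linarith
  exact hne (by rw [ha, hb])
end

section
/- The family of univariate logistic cumulative distribution functions {x ↦ 1/(1 + exp(-(x-μ)/σ)) : μ ∈ ℝ, σ > 0} is linearly independent over ℝ (as functions on ℝ). -/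
/-!
Continue each logistic CDF to `ℂ`: the one with location `μ` and scale `σ` is holomorphic on the
strip `|Im z| < πσ` and has a pole at `μ + πσi`. A vanishing combination vanishes on the strip of
the smallest scale `σ₀` by the identity theorem. Near the pole `μ₀ + πσ₀i` of a member of minimal
scale all other members are holomorphic (larger scales have their poles further out, equal scales
have them at other real parts), so the coefficient of that member is zero. Applied to a member of
minimal scale among those with non-zero coefficient, this gives linear independence.
-/

open Complex Filter Topology Finset Set

namespace Complex

theorem one_add_exp_ne_zero_of_re_ne_zero {w : ℂ} (hw : w.re ≠ 0) : 1 + exp w ≠ 0 := by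
  intro h
  have hnorm : Real.exp w.re = 1 := by
    rw [← norm_exp, eq_neg_of_add_eq_zero_right h, norm_neg, norm_one]
  exact hw (Real.exp_eq_one_iff _ |>.1 hnorm)

theorem one_add_exp_ne_zero_of_abs_im_lt {w : ℂ} (hw : |w.im| < Real.pi) : 1 + exp w ≠ 0 := by
  intro h
  have hexp : exp w = -1 := eq_neg_of_add_eq_zero_right h
  have him : w.im = 0 := by
    have := congrArg im hexp
    rw [exp_im, neg_im, one_im, neg_zero, mul_eq_zero] at this
    obtain ⟨hlo, hhi⟩ := abs_lt.1 hw
    exact (Real.sin_eq_zero_iff_of_lt_of_lt hlo hhi).1 (this.resolve_left (Real.exp_ne_zero _))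
  have := congrArg re hexp
  rw [exp_re, him, Real.cos_zero, mul_one, neg_re, one_re] at this
  linarith [Real.exp_pos w.re]

end Complex

/-- The logistic CDF with location `μ` and scale `σ`, continued to `ℂ`, is
`(logisticDenom μ σ ·)⁻¹`. -/
noncomputable def logisticDenom (μ σ : ℝ) (z : ℂ) : ℂ := 1 + exp (-(z - μ) / σ)

theorem logisticDenom_ofReal (μ σ x : ℝ) :
    logisticDenom μ σ x = ((1 + Real.exp (-(x - μ) / σ) : ℝ) : ℂ) := by
  simp [logisticDenom]

theorem differentiable_logisticDenom (μ σ : ℝ) : Differentiable ℂ (logisticDenom μ σ) := by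
  unfold logisticDenom; fun_prop

theorem logisticDenom_ne_zero_of_abs_im_lt {μ σ : ℝ} {z : ℂ} (hσ : 0 < σ)
    (hz : |z.im| < Real.pi * σ) : logisticDenom μ σ z ≠ 0 := by
  apply one_add_exp_ne_zero_of_abs_im_lt
  have : (-(z - μ) / σ).im = -z.im / σ := by simp
  rwa [this, abs_div, abs_neg, abs_of_pos hσ, div_lt_iff₀ hσ]

theorem logisticDenom_ne_zero_of_re_ne {μ σ : ℝ} {z : ℂ} (hσ : σ ≠ 0) (hz : z.re ≠ μ) :
    logisticDenom μ σ z ≠ 0 := by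
  apply one_add_exp_ne_zero_of_re_ne_zero
  have : (-(z - μ) / σ).re = -(z.re - μ) / σ := by simp
  rw [this]
  exact div_ne_zero (neg_ne_zero.2 (sub_ne_zero.2 hz)) hσ

theorem logisticDenom_pole {μ σ : ℝ} (hσ : σ ≠ 0) :
    logisticDenom μ σ (μ + (Real.pi * σ : ℝ) * I) = 0 := by
  have : -((μ : ℂ) + (Real.pi * σ : ℝ) * I - μ) / σ = -(Real.pi * I) := by
    have hσ' : (σ : ℂ) ≠ 0 := ofReal_ne_zero.2 hσ
    push_cast; field_simp; ring
  rw [logisticDenom, this, exp_neg_pi_mul_I, add_neg_cancel]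

theorem logisticDenom_ne_zero_at_pole {μ σ μ₀ σ₀ : ℝ} (hσ₀ : 0 < σ₀) (hle : σ₀ ≤ σ)
    (hne : σ₀ = σ → μ₀ ≠ μ) : logisticDenom μ σ (μ₀ + (Real.pi * σ₀ : ℝ) * I) ≠ 0 := by
  rcases hle.lt_or_eq with hlt | heq
  · refine logisticDenom_ne_zero_of_abs_im_lt (hσ₀.trans hlt) ?_
    rw [show ((μ₀ : ℂ) + (Real.pi * σ₀ : ℝ) * I).im = Real.pi * σ₀ by simp,
      abs_of_pos (by positivity)]
    exact mul_lt_mul_of_pos_left hlt Real.pi_pos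
  · exact logisticDenom_ne_zero_of_re_ne (heq ▸ hσ₀.ne') (by simpa using hne heq)

theorem eqOn_zero_of_forall_ofReal_eq_zero {f : ℂ → ℂ} {U : Set ℂ} (hf : DifferentiableOn ℂ f U)
    (hU : IsOpen U) (hU' : IsPreconnected U) {x₀ : ℝ} (hx₀ : (x₀ : ℂ) ∈ U)
    (hreal : ∀ x : ℝ, f x = 0) : EqOn f 0 U := by
  have hofReal : Tendsto ((↑) : ℝ → ℂ) (𝓝[≠] x₀) (𝓝[≠] (x₀ : ℂ)) :=
    continuous_ofReal.continuousWithinAt.tendsto_nhdsWithin fun _ hx ↦ by simpa using hx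
  exact (hf.analyticOnNhd hU).eqOn_zero_of_preconnected_of_frequently_eq_zero hU' hx₀
    (hofReal.frequently (.of_forall hreal))

theorem isPreconnected_preimage_im_Ioo (a b : ℝ) : IsPreconnected (im ⁻¹' Ioo a b) :=
  ((convex_Ioo a b).linear_preimage imLm).isPreconnected

theorem eq_zero_of_eventually_eq_mul_of_tendsto {α R : Type*} [TopologicalSpace R] [T2Space R]
    [MulZeroClass R] [ContinuousMul R] {l : Filter α} [l.NeBot] {c L : R} {d h : α → R}
    (hd : Tendsto d l (𝓝 0)) (hh : Tendsto h l (𝓝 L)) (hc : ∀ᶠ x in l, c = h x * d x) :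
    c = 0 :=
  tendsto_nhds_unique (tendsto_const_nhds.congr' hc) (by simpa using hh.mul hd)

theorem coeff_eq_zero_of_minimal_scale {s : Finset (ℝ × {σ : ℝ // 0 < σ})}
    {g : ℝ × {σ : ℝ // 0 < σ} → ℂ} {q : ℝ × {σ : ℝ // 0 < σ}} (hq : q ∈ s)
    (hmin : ∀ p ∈ s, (q.2 : ℝ) ≤ p.2)
    (hzero : ∀ x : ℝ, ∑ p ∈ s, g p * (logisticDenom p.1 p.2 x)⁻¹ = 0) : g q = 0 := by
  set a := Real.pi * q.2
  set U := im ⁻¹' Ioo (-a) a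
  have ha : 0 < a := mul_pos Real.pi_pos q.2.2
  have hden : ∀ p ∈ s, ∀ z ∈ U, logisticDenom p.1 p.2 z ≠ 0 := fun p hp z hz ↦
    logisticDenom_ne_zero_of_abs_im_lt p.2.2 <| (abs_lt.2 hz).trans_le <|
      mul_le_mul_of_nonneg_left (hmin p hp) Real.pi_pos.le
  have hU : EqOn (fun z ↦ ∑ p ∈ s, g p * (logisticDenom p.1 p.2 z)⁻¹) 0 U := by
    refine eqOn_zero_of_forall_ofReal_eq_zero (x₀ := 0) ?_ (isOpen_Ioo.preimage continuous_im)
      (isPreconnected_preimage_im_Ioo _ _) (by simp [U, ha]) hzero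
    exact DifferentiableOn.fun_sum fun p hp ↦ DifferentiableOn.const_mul
      ((differentiable_logisticDenom _ _).differentiableOn.inv (hden p hp)) _
  set z₀ : ℂ := q.1 + (a : ℂ) * I
  have hz₀ : z₀ ∈ closure U := by
    rw [closure_preimage_im, closure_Ioo (by linarith)]
    simp [z₀, ha.le]
  have : (𝓝[U] z₀).NeBot := mem_closure_iff_nhdsWithin_neBot.1 hz₀
  have hother : ∀ p ∈ s.erase q, logisticDenom p.1 p.2 z₀ ≠ 0 := by
    intro p hp
    obtain ⟨hpq, hp⟩ := mem_erase.1 hp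
    exact logisticDenom_ne_zero_at_pole q.2.2 (hmin p hp)
      fun heq hμ ↦ hpq (Prod.ext hμ.symm (Subtype.ext heq.symm))
  refine eq_zero_of_eventually_eq_mul_of_tendsto (l := 𝓝[U] z₀) (d := logisticDenom q.1 q.2)
    (h := fun z ↦ -∑ p ∈ s.erase q, g p * (logisticDenom p.1 p.2 z)⁻¹)
    (L := -∑ p ∈ s.erase q, g p * (logisticDenom p.1 p.2 z₀)⁻¹) ?_ ?_ ?_
  · rw [← logisticDenom_pole q.2.2.ne']
    exact (differentiable_logisticDenom _ _).continuous.continuousWithinAt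
  · refine (Tendsto.neg <| tendsto_finsetSum _ fun p hp ↦ ?_).mono_left nhdsWithin_le_nhds
    exact (((differentiable_logisticDenom _ _).continuous.tendsto z₀).inv₀
      (hother p hp)).const_mul _
  · filter_upwards [self_mem_nhdsWithin] with z hz
    have := hU hz
    simp only [Pi.zero_apply, ← add_sum_erase s _ hq] at this
    rw [← eq_neg_of_add_eq_zero_left this, inv_mul_cancel_right₀ (hden q hq z hz)]

theorem logistic_cdf_family_linearIndependent :
    LinearIndependent ℝ
      (fun p : ℝ × {σ : ℝ // 0 < σ} => fun x : ℝ =>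
        (1 + Real.exp (-(x - p.1) / (p.2 : ℝ)))⁻¹) := by
  rw [linearIndependent_iff']
  intro s g hsum i hi
  by_contra hgi
  set t := s.filter (g · ≠ 0)
  obtain ⟨q, hq, hmin⟩ := t.exists_min_image (fun p ↦ (p.2 : ℝ)) ⟨i, mem_filter.2 ⟨hi, hgi⟩⟩
  have hzero : ∀ x : ℝ, ∑ p ∈ t, (g p : ℂ) * (logisticDenom p.1 p.2 x)⁻¹ = 0 := by
    intro x
    rw [sum_filter_of_ne fun p _ hp ↦ ofReal_ne_zero.1 (left_ne_zero_of_mul hp)]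
    simpa [logisticDenom_ofReal] using congrArg ((↑) : ℝ → ℂ) (congrFun hsum x)
  exact (mem_filter.1 hq).2 (ofReal_eq_zero.1 (coeff_eq_zero_of_minimal_scale hq hmin hzero))
end

section
/- For fixed scale vector Σ ∈ (0,∞)^p, finite mixtures of p-variate logistic distributions with common scale Σ are identifiable: equality of two such mixture cdfs on ℝ^p implies equality of the number of components, the weights, and the location vectors (as unordered collections). -/
/-!
By Yakowitz–Spragins it suffices that the logistic cdfs `L(·; a, σ)`, `a ∈ ℝ^p`, are linearly
independent. Given finitely many locations, restrict to the curve `x_k = σ_k (log u - log z_k)`,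
`u > 0`: there `L(x; a, σ) = u / (u + γ a)` with `γ a = ∑_k exp (a_k / σ_k) z_k`. Taking `z` on the
moment curve `z_k = τ^k` with `τ` off the roots of finitely many nonzero polynomials makes `γ`
injective on the given locations, and the Cauchy kernels `u ↦ (u + c)⁻¹` with distinct poles are
linearly independent on any infinite set, since a vanishing combination is a polynomial with
infinitely many roots once the denominators are cleared.
-/

open Finset Polynomial Function

theorem Finsupp.mapDomain_apply_ne_zero_iff {ι X R : Type*} [AddCommMonoid R] {μ : ι → X}
    (hμ : Injective μ) {l : ι →₀ R} (hl : ∀ i, l i ≠ 0) (x : X) :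
    l.mapDomain μ x ≠ 0 ↔ x ∈ Set.range μ := by
  refine ⟨not_imp_comm.mp (Finsupp.mapDomain_of_notMem_range l x), ?_⟩
  rintro ⟨i, rfl⟩
  rw [Finsupp.mapDomain_apply hμ]
  exact hl i

theorem LinearIndependent.exists_equiv_of_sum_smul_eq {R M X ι κ : Type*} [Ring R]
    [AddCommGroup M] [Module R M] [Fintype ι] [Fintype κ] {f : X → M}
    (hf : LinearIndependent R f) {π : ι → R} {μ : ι → X} {π' : κ → R} {μ' : κ → X}
    (hπ : ∀ i, π i ≠ 0) (hπ' : ∀ j, π' j ≠ 0) (hμ : Injective μ) (hμ' : Injective μ')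
    (h : ∑ i, π i • f (μ i) = ∑ j, π' j • f (μ' j)) :
    ∃ e : ι ≃ κ, ∀ i, π' (e i) = π i ∧ μ' (e i) = μ i := by
  set l := (Finsupp.linearEquivFunOnFinite R R ι).symm π
  set l' := (Finsupp.linearEquivFunOnFinite R R κ).symm π'
  have hll' : l.mapDomain μ = l'.mapDomain μ' := hf <| by
    simpa [l, l', Finsupp.linearCombination_mapDomain,
      Finsupp.linearCombination_eq_fintype_linearCombination_apply,
      Fintype.linearCombination_apply] using h
  have hrange : Set.range μ = Set.range μ' := Set.ext fun x => by
    rw [← Finsupp.mapDomain_apply_ne_zero_iff hμ (l := l) (by simpa [l] using hπ),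
      ← Finsupp.mapDomain_apply_ne_zero_iff hμ' (l := l') (by simpa [l'] using hπ'), hll']
  set e := (Equiv.ofInjective μ hμ).trans
    ((Equiv.setCongr hrange).trans (Equiv.ofInjective μ' hμ').symm)
  have hμe : ∀ i, μ' (e i) = μ i := fun i => by simp [e, Equiv.apply_ofInjective_symm]
  refine ⟨e, fun i => ⟨?_, hμe i⟩⟩
  calc π' (e i) = l'.mapDomain μ' (μ' (e i)) := by simp [l', Finsupp.mapDomain_apply hμ']
    _ = l.mapDomain μ (μ i) := by rw [hμe, hll']
    _ = π i := by simp [l, Finsupp.mapDomain_apply hμ]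

theorem Polynomial.eval_ofFn_s10 {R : Type*} [CommSemiring R] [DecidableEq R] {n : ℕ} (v : Fin n → R)
    (x : R) :
    (ofFn n v).eval x = v ⬝ᵥ fun k => x ^ (k : ℕ) := by
  simp [ofFn_eq_sum_monomial, eval_finsetSum, dotProduct]

theorem exists_pos_injOn_dotProduct {n : ℕ} (S : Finset (Fin n → ℝ)) :
    ∃ z : Fin n → ℝ, (∀ k, 0 < z k) ∧ Set.InjOn (· ⬝ᵥ z) S := by
  classical
  set Q : ℝ[X] := ∏ vw ∈ S.offDiag, ofFn n (vw.1 - vw.2)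
  have hQ : Q ≠ 0 := prod_ne_zero_iff.mpr fun vw hvw => by
    rw [Ne, ← map_zero (ofFn n), (injective_ofFn n).eq_iff, sub_eq_zero]
    exact (mem_offDiag.mp hvw).2.2
  obtain ⟨τ, hτ, hQτ⟩ := ((Set.Ioi_infinite (0 : ℝ)).sdiff (finite_setOfPred_isRoot hQ)).nonempty
  refine ⟨fun k => τ ^ (k : ℕ), fun k => pow_pos hτ _, fun v hv w hw hvw => ?_⟩
  by_contra hne
  apply hQτ
  simp only [Set.mem_ofPred_eq, IsRoot.def, Q, eval_prod]
  refine prod_eq_zero (i := (v, w)) (mem_offDiag.mpr ⟨hv, hw, hne⟩) ?_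
  rw [eval_ofFn_s10, sub_dotProduct, sub_eq_zero]
  exact hvw

theorem linearIndependent_inv_add {K : Type*} [Field K] {D : Set K} (hD : D.Infinite) :
    LinearIndependent K (fun (c : K) (u : D) => ((u : K) + c)⁻¹) := by
  classical
  rw [linearIndependent_iff']
  intro S α hα c hc
  have hinj : Set.InjOn (fun d : K => -d) S := neg_injective.injOn
  -- Barycentric form: off the nodes `-d`, this interpolant is `nodal · ∑ α d / (u + d)`.
  set r : K → K := fun d => α d / Lagrange.nodalWeight S (fun d => -d) d
  have hzero : Lagrange.interpolate S (fun d => -d) r = 0 := by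
    refine eq_zero_of_infinite_isRoot _ ((hD.sdiff (S.image (fun d => -d)).finite_toSet).mono ?_)
    rintro u ⟨huD, hu⟩
    have hnode : ∀ d ∈ S, u ≠ -d := fun d hd h => hu (by simp [h, hd])
    have hsum := congrFun hα ⟨u, huD⟩
    simp only [Finset.sum_apply, Pi.smul_apply, smul_eq_mul, Pi.zero_apply] at hsum
    rw [Set.mem_ofPred_eq, IsRoot.def, Lagrange.eval_interpolate_not_at_node r hnode]
    refine mul_eq_zero_of_right _ (Eq.trans (Finset.sum_congr rfl fun d hd => ?_) hsum)
    have := Lagrange.nodalWeight_ne_zero hinj hd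
    simp only [r, sub_neg_eq_add]
    field_simp
  have hrc : r c = 0 := by
    rw [← Lagrange.eval_interpolate_at_node r hinj hc, hzero, eval_zero]
  simpa [r, Lagrange.nodalWeight_ne_zero hinj hc] using hrc

noncomputable def logisticCDF {p : ℕ} (σ μ x : Fin p → ℝ) : ℝ :=
  (1 + ∑ k, Real.exp (-(x k - μ k) / σ k))⁻¹

theorem logisticCDF_log_sub {p : ℕ} {σ z : Fin p → ℝ} (hσ : ∀ k, σ k ≠ 0) (hz : ∀ k, 0 < z k)
    (μ : Fin p → ℝ) {u : ℝ} (hu : 0 < u) :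
    logisticCDF σ μ (fun k => σ k * (Real.log u - Real.log (z k))) =
      (1 + (fun k => Real.exp (μ k / σ k)) ⬝ᵥ z / u)⁻¹ := by
  rw [logisticCDF, dotProduct, sum_div]
  congr 2
  refine sum_congr rfl fun k _ => ?_
  have : -(σ k * (Real.log u - Real.log (z k)) - μ k) / σ k =
      μ k / σ k + Real.log (z k) - Real.log u := by
    field_simp [hσ k]
    ring
  rw [this, Real.exp_sub, Real.exp_add, Real.exp_log (hz k), Real.exp_log hu]

theorem linearIndependent_logisticCDF {p : ℕ} {σ : Fin p → ℝ} (hσ : ∀ k, σ k ≠ 0) :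
    LinearIndependent ℝ (logisticCDF σ) := by
  classical
  rw [linearIndependent_iff_finset_linearIndependent]
  intro S
  set E : (Fin p → ℝ) → Fin p → ℝ := fun a k => Real.exp (a k / σ k)
  have hE : Injective E := fun a b hab => funext fun k => by
    simpa [hσ k] using Real.exp_injective (congrFun hab k)
  obtain ⟨z, hz, hzS⟩ := exists_pos_injOn_dotProduct (S.image E)
  have hγ : Injective fun a : S => E a ⬝ᵥ z := fun a b hab =>
    Subtype.ext (hE (hzS (mem_image_of_mem E a.2) (mem_image_of_mem E b.2) hab))
  let Φ : ((Fin p → ℝ) → ℝ) →ₗ[ℝ] Set.Ioi (0 : ℝ) → ℝ :=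
    LinearMap.mulLeft ℝ (fun u => (u : ℝ)⁻¹) ∘ₗ
      LinearMap.funLeft ℝ ℝ (fun u k => σ k * (Real.log u - Real.log (z k)))
  have hΦ : Φ ∘ (logisticCDF σ ∘ Subtype.val) =
      (fun (c : ℝ) (u : Set.Ioi (0 : ℝ)) => ((u : ℝ) + c)⁻¹) ∘ fun a : S => E a ⬝ᵥ z := by
    ext a ⟨u, hu : 0 < u⟩
    simp only [Φ, comp_apply, LinearMap.comp_apply, LinearMap.funLeft_apply,
      LinearMap.mulLeft_apply, Pi.mul_apply, logisticCDF_log_sub hσ hz _ hu, E]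
    field_simp [hu.ne']
  exact .of_comp Φ (hΦ ▸ (linearIndependent_inv_add (Set.Ioi_infinite 0)).comp _ hγ)

theorem multivariate_logistic_mixture_identifiable_fixed_scale_general
    (p s t : ℕ)
    (Sc : Fin p → ℝ) (hSc : ∀ k, 0 < Sc k)
    (π : Fin s → ℝ) (μ : Fin s → Fin p → ℝ)
    (π' : Fin t → ℝ) (μ' : Fin t → Fin p → ℝ)
    (hπ : ∀ i, π i ∈ Set.Ioo (0 : ℝ) 1) (hπ' : ∀ j, π' j ∈ Set.Ioo (0 : ℝ) 1)
    (hμ : Function.Injective μ) (hμ' : Function.Injective μ')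
    (h : ∀ x : Fin p → ℝ,
      ∑ i, π i * (1 + ∑ k, Real.exp (-(x k - μ i k) / Sc k))⁻¹ =
      ∑ j, π' j * (1 + ∑ k, Real.exp (-(x k - μ' j k) / Sc k))⁻¹) :
    ∃ e : Fin s ≃ Fin t, ∀ i, π' (e i) = π i ∧ μ' (e i) = μ i := by
  have hmix : ∑ i, π i • logisticCDF Sc (μ i) = ∑ j, π' j • logisticCDF Sc (μ' j) :=
    funext fun x => by simpa [logisticCDF] using h x
  exact (linearIndependent_logisticCDF fun k => (hSc k).ne').exists_equiv_of_sum_smul_eq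
    (fun i => (hπ i).1.ne') (fun j => (hπ' j).1.ne') hμ hμ' hmix

theorem multivariate_logistic_mixture_identifiable_fixed_scale
    (p s t : ℕ)
    (Sc : Fin p → ℝ) (hSc : ∀ k, 0 < Sc k)
    (π : Fin s → ℝ) (μ : Fin s → Fin p → ℝ)
    (π' : Fin t → ℝ) (μ' : Fin t → Fin p → ℝ)
    (hπ : ∀ i, π i ∈ Set.Ioo (0 : ℝ) 1) (hπ' : ∀ j, π' j ∈ Set.Ioo (0 : ℝ) 1)
    (hsum : ∑ i, π i = 1) (hsum' : ∑ j, π' j = 1)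
    (hμ : Function.Injective μ) (hμ' : Function.Injective μ')
    (h : ∀ x : Fin p → ℝ,
      ∑ i, π i * (1 + ∑ k, Real.exp (-(x k - μ i k) / Sc k))⁻¹ =
      ∑ j, π' j * (1 + ∑ k, Real.exp (-(x k - μ' j k) / Sc k))⁻¹) :
    ∃ e : Fin s ≃ Fin t, ∀ i, π' (e i) = π i ∧ μ' (e i) = μ i :=
  multivariate_logistic_mixture_identifiable_fixed_scale_general p s t Sc hSc π μ π' μ' hπ hπ' hμ
    hμ' h
end

section
/- The function l(x_1,...,x_p) = p! · exp(-sum_{k=1}^p x_k) · [1 + sum_{k=1}^p exp(-x_k)]^{-(p+1)} is a probability density on ℝ^p, and its cumulative distribution function is L(x_1,...,x_p) = [1 + sum_{k=1}^p exp(-x_k)]^{-1}. -/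
/-!
Replace the `1` in the density by a parameter `c > 0` (`logisticDensity p c`). Its integral over
`{x | ∀ k, e k ≤ exp (-x k)}` is `(c + ∑ k, e k)⁻¹` for every `e ≥ 0`, by induction on `p`:
integrating out the first coordinate over `{t | e 0 ≤ exp (-t)}` (substituting `u = exp (-t)`)
turns the density in dimension `p + 1` with parameter `c` into the one in dimension `p` with
parameter `c + e 0`. Taking `e = 0` gives total mass one, and `e k = exp (-x k)` gives the
distribution function.
-/

open MeasureTheory Set Filter Real

lemma lintegral_Ioi_mul_inv_add_pow {a e : ℝ} (hae : 0 < a + e) (n : ℕ) :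
    ∫⁻ u in Ioi e, ENNReal.ofReal ((n + 1) * ((a + u) ^ (n + 2))⁻¹) =
      ENNReal.ofReal ((a + e) ^ (n + 1))⁻¹ := by
  have hpos : ∀ u ∈ Ici e, 0 < a + u := fun u hu => hae.trans_le (by simpa using hu.out)
  have hderiv : ∀ u ∈ Ici e, HasDerivAt (fun u => -((a + u) ^ (n + 1))⁻¹)
      ((n + 1) * ((a + u) ^ (n + 2))⁻¹) u := by
    intro u hu
    have hne := (hpos u hu).ne'
    refine ((((hasDerivAt_id u).const_add a).pow (n + 1)).inv
      (pow_ne_zero _ hne)).neg.congr_deriv ?_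
    simp only [id, Pi.pow_apply, Nat.add_sub_cancel]
    field_simp
    push_cast
    ring
  have hnonneg : ∀ u ∈ Ioi e, 0 ≤ (n + 1) * ((a + u) ^ (n + 2))⁻¹ := fun u hu =>
    have := hpos u (Ioi_subset_Ici_self hu); by positivity
  have hlim : Tendsto (fun u => -((a + u) ^ (n + 1))⁻¹) atTop (nhds 0) := by
    simpa using ((tendsto_pow_atTop (Nat.succ_ne_zero n)).comp
      (tendsto_atTop_add_const_left _ a tendsto_id)).inv_tendsto_atTop.neg
  rw [← ofReal_integral_eq_lintegral_ofReal
      (integrableOn_Ioi_deriv_of_nonneg' hderiv hnonneg hlim)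
      ((ae_restrict_iff' measurableSet_Ioi).2 (Eventually.of_forall hnonneg)),
    integral_Ioi_of_hasDerivAt_of_nonneg' hderiv hnonneg hlim]
  simp

lemma setLIntegral_preimage_exp_neg {T : Set ℝ} (hT : MeasurableSet T) (U : ℝ → ENNReal) :
    ∫⁻ t in (fun t => exp (-t)) ⁻¹' T, ENNReal.ofReal (exp (-t)) * U (exp (-t)) =
      ∫⁻ u in T ∩ Ioi 0, U u := by
  have hrange : range (fun t => exp (-t)) = Ioi 0 := by
    rw [← range_exp]; exact neg_surjective.range_comp exp
  have hanti : Antitone (fun t => exp (-t)) := fun s t hst => exp_le_exp.2 (neg_le_neg hst)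
  rw [← hrange, ← image_preimage_eq_inter_range,
    lintegral_image_eq_lintegral_deriv_mul_of_antitoneOn (hT.preimage (by fun_prop))
      (fun t _ => (hasDerivAt_neg' t).exp.hasDerivWithinAt) (hanti.antitoneOn _)]
  simp

lemma lintegral_exp_neg_mul_inv_add_exp_neg_pow {a e : ℝ} (ha : 0 < a) (he : 0 ≤ e) (n : ℕ) :
    ∫⁻ t in {t | e ≤ exp (-t)},
        ENNReal.ofReal ((n + 1) * exp (-t) * ((a + exp (-t)) ^ (n + 2))⁻¹) =
      ENNReal.ofReal ((a + e) ^ (n + 1))⁻¹ := by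
  have hsplit : ∀ t, ENNReal.ofReal ((n + 1) * exp (-t) * ((a + exp (-t)) ^ (n + 2))⁻¹) =
      ENNReal.ofReal (exp (-t)) * ENNReal.ofReal ((n + 1) * ((a + exp (-t)) ^ (n + 2))⁻¹) := by
    intro t
    rw [← ENNReal.ofReal_mul (exp_pos _).le, mul_left_comm, mul_assoc]
  have hae : (Ici e ∩ Ioi 0 : Set ℝ) =ᵐ[volume] Ioi e := by
    conv_rhs => rw [← inter_eq_left.2 (Ioi_subset_Ioi he)]
    exact Ioi_ae_eq_Ici.symm.inter (ae_eq_refl _)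
  simp_rw [hsplit]
  rw [← lintegral_Ioi_mul_inv_add_pow (by linarith) n, ← setLIntegral_congr hae]
  exact setLIntegral_preimage_exp_neg measurableSet_Ici
    (fun u => ENNReal.ofReal ((n + 1) * ((a + u) ^ (n + 2))⁻¹))

noncomputable def logisticDensity (p : ℕ) (c : ℝ) (x : Fin p → ℝ) : ℝ :=
  p.factorial * exp (-∑ k, x k) * ((c + ∑ k, exp (-x k)) ^ (p + 1))⁻¹

lemma logisticDensity_nonneg {p : ℕ} {c : ℝ} (hc : 0 ≤ c) (x : Fin p → ℝ) :
    0 ≤ logisticDensity p c x := by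
  unfold logisticDensity
  have : 0 ≤ ∑ k, exp (-x k) := by positivity
  positivity

lemma measurable_logisticDensity (p : ℕ) (c : ℝ) : Measurable (logisticDensity p c) := by
  unfold logisticDensity
  fun_prop

lemma lintegral_logisticDensity_cons {p : ℕ} {c e : ℝ} (hc : 0 < c) (he : 0 ≤ e)
    (y : Fin p → ℝ) :
    ∫⁻ t in {t | e ≤ exp (-t)}, ENNReal.ofReal (logisticDensity (p + 1) c (Fin.cons t y)) =
      ENNReal.ofReal (logisticDensity p (c + e) y) := by
  set a := c + ∑ k, exp (-y k)
  have ha : 0 < a := by positivity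
  have hcons : ∀ t, logisticDensity (p + 1) c (Fin.cons t y) = p.factorial * exp (-∑ k, y k) *
      ((p + 1) * exp (-t) * ((a + exp (-t)) ^ (p + 2))⁻¹) := by
    intro t
    simp only [logisticDensity, Fin.sum_univ_succ, Fin.cons_zero, Fin.cons_succ, neg_add,
      exp_add, Nat.factorial_succ, Nat.cast_mul, Nat.cast_succ, a]
    ring
  have hcoef : 0 ≤ (p.factorial : ℝ) * exp (-∑ k, y k) := by positivity
  simp_rw [hcons, ENNReal.ofReal_mul hcoef]
  rw [lintegral_const_mul _ (by fun_prop), lintegral_exp_neg_mul_inv_add_exp_neg_pow ha he,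
    ← ENNReal.ofReal_mul hcoef, logisticDensity, add_right_comm]

lemma lintegral_logisticDensity (p : ℕ) {c : ℝ} (hc : 0 < c) {e : Fin p → ℝ}
    (he : ∀ k, 0 ≤ e k) :
    ∫⁻ x in {x | ∀ k, e k ≤ exp (-x k)}, ENNReal.ofReal (logisticDensity p c x) =
      ENNReal.ofReal (c + ∑ k, e k)⁻¹ := by
  induction p generalizing c with
  | zero => simp [logisticDensity, volume_pi]
  | succ p ih =>
    let E := MeasurableEquiv.piFinSuccAbove (fun _ : Fin (p + 1) => ℝ) 0
    have hE : MeasurePreserving E.symm := (volume_preserving_piFinSuccAbove _ 0).symm _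
    have hEsymm : ∀ z, E.symm z = Fin.cons z.1 z.2 := fun z => by
      simp [E, MeasurableEquiv.piFinSuccAbove_symm_apply, Fin.insertNthEquiv]
    have hpre : E.symm ⁻¹' {x | ∀ k, e k ≤ exp (-x k)} =
        {t | e 0 ≤ exp (-t)} ×ˢ {y | ∀ k, e k.succ ≤ exp (-y k)} := by
      ext z
      simp [hEsymm, Fin.forall_fin_succ]
    calc ∫⁻ x in {x | ∀ k, e k ≤ exp (-x k)}, ENNReal.ofReal (logisticDensity (p + 1) c x)
        = ∫⁻ z in E.symm ⁻¹' {x | ∀ k, e k ≤ exp (-x k)},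
            ENNReal.ofReal (logisticDensity (p + 1) c (E.symm z)) :=
          (hE.setLIntegral_comp_preimage_emb E.symm.measurableEmbedding _ _).symm
      _ = ∫⁻ y in {y | ∀ k, e k.succ ≤ exp (-y k)}, ∫⁻ t in {t | e 0 ≤ exp (-t)},
            ENNReal.ofReal (logisticDensity (p + 1) c (Fin.cons t y)) := by
          rw [hpre, Measure.volume_eq_prod, ← Measure.prod_restrict, lintegral_prod_symm]
          · simp only [hEsymm]
          · exact ((measurable_logisticDensity _ _).comp
              E.symm.measurable).ennreal_ofReal.aemeasurable
      _ = ∫⁻ y in {y | ∀ k, e k.succ ≤ exp (-y k)},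
            ENNReal.ofReal (logisticDensity p (c + e 0) y) := by
          simp_rw [lintegral_logisticDensity_cons hc (he 0)]
      _ = ENNReal.ofReal (c + ∑ k, e k)⁻¹ := by
          rw [ih (add_pos_of_pos_of_nonneg hc (he 0)) (fun k => he k.succ), Fin.sum_univ_succ,
            add_assoc]

lemma setIntegral_logisticDensity (p : ℕ) {c : ℝ} (hc : 0 < c) {e : Fin p → ℝ}
    (he : ∀ k, 0 ≤ e k) :
    ∫ x in {x | ∀ k, e k ≤ exp (-x k)}, logisticDensity p c x = (c + ∑ k, e k)⁻¹ := by
  have hpos : 0 < c + ∑ k, e k := add_pos_of_pos_of_nonneg hc (Finset.sum_nonneg fun k _ => he k)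
  rw [integral_eq_lintegral_of_nonneg_ae (Eventually.of_forall (logisticDensity_nonneg hc.le))
      (measurable_logisticDensity p c).aestronglyMeasurable,
    lintegral_logisticDensity p hc he, ENNReal.toReal_ofReal (inv_nonneg.2 hpos.le)]

theorem multivariate_logistic_density
    (p : ℕ)
    (l : (Fin p → ℝ) → ℝ)
    (hl : l = fun x => (p.factorial : ℝ) * Real.exp (-∑ k, x k) *
      ((1 + ∑ k, Real.exp (-x k)) ^ (p + 1))⁻¹) :
    (∀ x, 0 ≤ l x) ∧
    (∫ x : Fin p → ℝ, l x = 1) ∧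
    (∀ x : Fin p → ℝ,
      ∫ y in {y : Fin p → ℝ | ∀ k, y k ≤ x k}, l y =
        (1 + ∑ k, Real.exp (-x k))⁻¹) := by
  obtain rfl : l = logisticDensity p 1 := hl
  refine ⟨logisticDensity_nonneg zero_le_one, ?_, fun x => ?_⟩
  · simpa [(exp_pos _).le] using setIntegral_logisticDensity p one_pos (e := 0) fun _ => le_rfl
  · have hbox : {y : Fin p → ℝ | ∀ k, y k ≤ x k} = {y | ∀ k, exp (-x k) ≤ exp (-y k)} := by
      simp
    rw [hbox, setIntegral_logisticDensity p one_pos fun k => (exp_pos _).le]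
end

section
/- Fix σ^1, σ^2 > 0 and p ≥ 2. If the family of functions x ↦ [1 + sum_{k=1}^{p-1} exp(-(x_k - ν^k)/τ^k)]^{-1} on ℝ^{p-1} (ν ∈ ℝ^{p-1}, fixed scales τ) is linearly independent over ℝ for distinct ν, then the family x ↦ [1 + sum_{k=1}^{p} exp(-(x_k - μ^k)/σ^k)]^{-1} on ℝ^p (fixed scales σ, distinct μ ∈ ℝ^p) is linearly independent over ℝ. -/
noncomputable def PhiAux (q : ℕ) (σ : Fin (q + 2) → ℝ) (y : ℝ) (μ : Fin (q + 2) → ℝ) :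
    Fin (q + 1) → ℝ :=
  Fin.cons (Real.log (Real.exp ((y + μ 0) / σ 0) + Real.exp (μ 1 / σ 1)))
    (fun j : Fin q => μ j.succ.succ)

noncomputable def PsiAux (q : ℕ) (σ : Fin (q + 2) → ℝ) (y : ℝ) (x : Fin (q + 1) → ℝ) :
    Fin (q + 2) → ℝ :=
  Fin.cons (σ 0 * x 0 - y) (Fin.cons (σ 1 * x 0) (fun j : Fin q => x j.succ))

lemma divCancelAux {a b c : ℝ} (hc : c ≠ 0) (h : a / c = b / c) : a = b := by
  field_simp at h; exact h

lemma keyAux (q : ℕ) (σ : Fin (q + 2) → ℝ) (hσ : ∀ k, 0 < σ k) (y : ℝ)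
    (μ : Fin (q + 2) → ℝ) (x : Fin (q + 1) → ℝ) :
    (1 + ∑ k, Real.exp (-(PsiAux q σ y x k - μ k) / σ k))⁻¹
      = (1 + ∑ k, Real.exp (-(x k - PhiAux q σ y μ k) /
          (Fin.cons 1 (fun j : Fin q => σ j.succ.succ) : Fin (q + 1) → ℝ) k))⁻¹ := by
  have hσ0 := (hσ 0).ne'
  have hσ1 := (hσ 1).ne'
  have hS : 0 < Real.exp ((y + μ 0) / σ 0) + Real.exp (μ 1 / σ 1) := by positivity
  congr 1
  rw [Fin.sum_univ_succ, Fin.sum_univ_succ, Fin.sum_univ_succ]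
  simp only [PsiAux, PhiAux, Fin.cons_zero, Fin.cons_succ]
  simp only [Fin.succ_zero_eq_one]
  have h0 : -(σ 0 * x 0 - y - μ 0) / σ 0 = -x 0 + (y + μ 0) / σ 0 := by
    field_simp; ring
  have h1 : -(σ 1 * x 0 - μ 1) / σ 1 = -x 0 + μ 1 / σ 1 := by
    field_simp; ring
  have h2 : -(x 0 - Real.log (Real.exp ((y + μ 0) / σ 0) + Real.exp (μ 1 / σ 1))) / 1
      = -x 0 + Real.log (Real.exp ((y + μ 0) / σ 0) + Real.exp (μ 1 / σ 1)) := by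
    ring
  rw [h0, h1, h2, Real.exp_add, Real.exp_add, Real.exp_add, Real.exp_log hS]
  ring

theorem multivariate_logistic_linearIndependent_inductive_step
    (p : ℕ) (hp : 2 ≤ p)
    (σ : Fin p → ℝ) (hσ : ∀ k, 0 < σ k)
    (ih : ∀ τ : Fin (p - 1) → ℝ, (∀ k, 0 < τ k) →
      LinearIndependent ℝ
        (fun ν : Fin (p - 1) → ℝ => fun x : Fin (p - 1) → ℝ =>
          (1 + ∑ k, Real.exp (-(x k - ν k) / τ k))⁻¹)) :
    LinearIndependent ℝ
      (fun μ : Fin p → ℝ => fun x : Fin p → ℝ =>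
        (1 + ∑ k, Real.exp (-(x k - μ k) / σ k))⁻¹) := by
  obtain ⟨q, rfl⟩ : ∃ q, p = q + 2 := ⟨p - 2, by omega⟩
  set τ : Fin (q + 1) → ℝ := Fin.cons 1 (fun j : Fin q => σ j.succ.succ) with hτdef
  have hτpos : ∀ k, 0 < τ k := by
    intro k
    refine Fin.cases ?_ ?_ k
    · simp [hτdef]
    · intro j; simpa [hτdef] using hσ j.succ.succ
  have hsub : ∀ (μ μ' : Fin (q + 2) → ℝ), μ ≠ μ' →
      {y : ℝ | PhiAux q σ y μ = PhiAux q σ y μ'}.Subsingleton := by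
    intro μ μ' hne y hy y' hy'
    simp only [Set.mem_setOf_eq] at hy hy'
    have htail : ∀ j : Fin q, μ j.succ.succ = μ' j.succ.succ := by
      intro j
      have := congrFun hy j.succ
      simpa [PhiAux, Fin.cons_succ] using this
    have h0 : ∀ z : ℝ, PhiAux q σ z μ = PhiAux q σ z μ' →
        Real.exp ((z + μ 0) / σ 0) + Real.exp (μ 1 / σ 1)
          = Real.exp ((z + μ' 0) / σ 0) + Real.exp (μ' 1 / σ 1) := by
      intro z hz
      have := congrFun hz 0
      simp only [PhiAux, Fin.cons_zero] at this
      have hS : 0 < Real.exp ((z + μ 0) / σ 0) + Real.exp (μ 1 / σ 1) := by positivity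
      have hS' : 0 < Real.exp ((z + μ' 0) / σ 0) + Real.exp (μ' 1 / σ 1) := by positivity
      have := congrArg Real.exp this
      rwa [Real.exp_log hS, Real.exp_log hS'] at this
    by_cases h00 : μ 0 = μ' 0
    · -- then μ 1 = μ' 1 so μ = μ', contradiction
      exfalso
      have h := h0 y hy
      rw [h00] at h
      have h1 : Real.exp (μ 1 / σ 1) = Real.exp (μ' 1 / σ 1) := by linarith
      have h1' : μ 1 = μ' 1 :=
        divCancelAux (hσ 1).ne' (Real.exp_injective h1)
      apply hne
      funext k
      refine Fin.cases ?_ (fun i => ?_) k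
      · exact h00
      · refine Fin.cases ?_ (fun j => ?_) i
        · exact h1'
        · exact htail j
    · -- μ 0 ≠ μ' 0, uniqueness of y
      have key : ∀ z : ℝ, PhiAux q σ z μ = PhiAux q σ z μ' →
          Real.exp (z / σ 0) * (Real.exp (μ 0 / σ 0) - Real.exp (μ' 0 / σ 0))
            = Real.exp (μ' 1 / σ 1) - Real.exp (μ 1 / σ 1) := by
        intro z hz
        have h := h0 z hz
        have e1 : (z + μ 0) / σ 0 = z / σ 0 + μ 0 / σ 0 := by ring
        have e2 : (z + μ' 0) / σ 0 = z / σ 0 + μ' 0 / σ 0 := by ring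
        rw [e1, e2, Real.exp_add, Real.exp_add] at h
        linear_combination h
      have hfact : Real.exp (μ 0 / σ 0) - Real.exp (μ' 0 / σ 0) ≠ 0 := by
        intro h
        apply h00
        have h' : Real.exp (μ 0 / σ 0) = Real.exp (μ' 0 / σ 0) := by linarith
        exact divCancelAux (hσ 0).ne' (Real.exp_injective h')
      have := (key y hy).trans (key y' hy').symm
      have hyy : Real.exp (y / σ 0) = Real.exp (y' / σ 0) :=
        mul_right_cancel₀ hfact this
      exact divCancelAux (hσ 0).ne' (Real.exp_injective hyy)
  rw [linearIndependent_iff']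
  intro s g hsum μ0 hμ0
  -- choose good y
  set B : Set ℝ := ⋃ μ ∈ (s : Set (Fin (q + 2) → ℝ)), ⋃ μ' ∈ (s : Set (Fin (q + 2) → ℝ)),
      {y : ℝ | μ ≠ μ' ∧ PhiAux q σ y μ = PhiAux q σ y μ'} with hBdef
  have hBfin : B.Finite := by
    refine Set.Finite.biUnion s.finite_toSet (fun μ _ => ?_)
    refine Set.Finite.biUnion s.finite_toSet (fun μ' _ => ?_)
    by_cases h : μ = μ'
    · convert Set.finite_empty
      ext z; simp [h]
    · refine Set.Finite.subset ((hsub μ μ' h).finite) ?_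
      intro z hz; exact hz.2
  obtain ⟨y, hy⟩ := (hBfin.infinite_compl).nonempty
  have hinj : Set.InjOn (PhiAux q σ y) (s : Set (Fin (q + 2) → ℝ)) := by
    intro μ hμ μ' hμ' heq
    by_contra hne
    exact hy (Set.mem_biUnion hμ (Set.mem_biUnion hμ' ⟨hne, heq⟩))
  -- coefficient transfer
  set c : (Fin (q + 1) → ℝ) → ℝ :=
    fun ν => g (Function.invFunOn (PhiAux q σ y) (s : Set (Fin (q + 2) → ℝ)) ν) with hcdef
  have hc : ∀ μ ∈ s, c (PhiAux q σ y μ) = g μ := by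
    intro μ hμ
    have hex : ∃ a ∈ (s : Set (Fin (q + 2) → ℝ)), PhiAux q σ y a = PhiAux q σ y μ :=
      ⟨μ, hμ, rfl⟩
    have h1 := Function.invFunOn_mem hex
    have h2 := Function.invFunOn_eq hex
    have h3 := hinj h1 hμ h2
    simp only [hcdef]
    rw [h3]
  have hsum' : ∑ ν ∈ s.image (PhiAux q σ y), c ν •
      (fun x : Fin (q + 1) → ℝ => (1 + ∑ k, Real.exp (-(x k - ν k) / τ k))⁻¹) = 0 := by
    rw [Finset.sum_image (fun a ha b hb h => hinj ha hb h)]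
    funext x
    have := congrFun hsum (PsiAux q σ y x)
    simp only [Finset.sum_apply, Pi.smul_apply, Pi.zero_apply, smul_eq_mul] at this ⊢
    rw [← this]
    refine Finset.sum_congr rfl (fun μ hμ => ?_)
    rw [hc μ hμ, keyAux q σ hσ y μ x]
  have hli := ih τ hτpos
  rw [linearIndependent_iff'] at hli
  have := hli (s.image (PhiAux q σ y)) c hsum' (PhiAux q σ y μ0)
    (Finset.mem_image_of_mem _ hμ0)
  rw [hc μ0 hμ0] at this
  exact this
end

section
/- If sum_{i=1}^s d_i/(1+exp(-(x-μ_i)/σ_i)) = 0 for all x with all σ_i equal to a common σ > 0 and μ_1,...,μ_s pairwise distinct, then after multiplying by (1+exp((x-μ_1)/σ)) and differentiating in x, one obtains sum_{i=2}^s d_i [exp(-μ_1/σ) - exp(-μ_i/σ)]·(1+exp((x-μ_i)/σ))^{-2} = 0 for all x; iterating this procedure yields d_s = 0. -/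
/-!
Substituting `t = exp (x / σ)` turns the `i`-th logistic term into `t * d i / (t + exp (μ i / σ))`,
so the hypothesis says that a partial-fraction sum `∑ d i / (t - v i)` with the distinct poles
`v i = -exp (μ i / σ)` vanishes for all `t > 0`. Up to the scalars `nodalWeight`, that sum is the
Lagrange interpolant of the data `d i / nodalWeight i` at the nodes `v i` divided by the nodal
polynomial; a polynomial with infinitely many roots is zero, so every datum, hence every `d i`,
vanishes, and both claims follow.
-/

open Polynomial Finset Real

namespace Lagrange

theorem eq_zero_of_sum_div_sub_eq_zero {F ι : Type*} [Field F] [Fintype ι] {v : ι → F}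
    (hv : Function.Injective v) {d : ι → F} {S : Set F} (hS : S.Infinite)
    (h : ∀ x ∈ S, ∑ i, d i / (x - v i) = 0) : d = 0 := by
  classical
  have hvs : Set.InjOn v (univ : Finset ι) := hv.injOn
  set r : ι → F := fun i => d i / nodalWeight univ v i
  have hroots : S \ Set.range v ⊆ {x | IsRoot (interpolate univ v r) x} := by
    rintro x ⟨hxS, hxv⟩
    have hx : ∀ i ∈ univ, x ≠ v i := fun i _ hxi => hxv ⟨i, hxi.symm⟩
    have hterm : ∀ i ∈ univ, nodalWeight univ v i * (x - v i)⁻¹ * r i = d i / (x - v i) :=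
      fun i hi => by
        have := nodalWeight_ne_zero hvs hi
        simp only [r]
        field_simp
    simp only [Set.mem_ofPred_eq, IsRoot.def, eval_interpolate_not_at_node r hx,
      sum_congr rfl hterm, h x hxS, mul_zero]
  have hP : interpolate univ v r = 0 :=
    eq_zero_of_infinite_isRoot _ ((hS.sdiff (Set.finite_range v)).mono hroots)
  funext i
  have hri : r i = 0 := by
    rw [← eval_interpolate_at_node r hvs (mem_univ i), hP, eval_zero]
  simpa [r, nodalWeight_ne_zero hvs (mem_univ i)] using hri

end Lagrange

theorem Real.one_add_exp_neg_sub_div (x μ σ : ℝ) :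
    1 + exp (-(x - μ) / σ) = (exp (x / σ) + exp (μ / σ)) / exp (x / σ) := by
  rw [neg_sub, sub_div, exp_sub]
  field_simp

theorem Real.eq_zero_of_sum_logistic_eq_zero {ι : Type*} [Fintype ι] {d μ : ι → ℝ} {σ : ℝ}
    (hσ : σ ≠ 0) (hμ : Function.Injective μ)
    (h : ∀ x, ∑ i, d i / (1 + exp (-(x - μ i) / σ)) = 0) : d = 0 := by
  have hv : Function.Injective fun i => -exp (μ i / σ) := fun i j hij =>
    hμ (by simpa [hσ] using hij)
  refine Lagrange.eq_zero_of_sum_div_sub_eq_zero hv (Set.Ioi_infinite 0) fun t ht => ?_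
  have ht : 0 < t := ht
  have hexp : exp (σ * log t / σ) = t := by
    rw [mul_div_cancel_left₀ _ hσ, exp_log ht]
  have hterm : ∀ i, d i / (1 + exp (-(σ * log t - μ i) / σ)) = t * (d i / (t - -exp (μ i / σ))) :=
    fun i => by
      rw [one_add_exp_neg_sub_div, hexp, sub_neg_eq_add]
      field_simp
  have := h (σ * log t)
  simp only [hterm, ← mul_sum] at this
  exact (mul_eq_zero.1 this).resolve_left ht.ne'

theorem logistic_elimination_step
    (s : ℕ) (d μ : Fin (s + 1) → ℝ) (σ : ℝ)
    (hσ : 0 < σ)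
    (hμ : Function.Injective μ)
    (h : ∀ x : ℝ, ∑ i, d i / (1 + Real.exp (-(x - μ i) / σ)) = 0) :
    (∀ x : ℝ, ∑ i ∈ Finset.univ.erase 0,
        d i * (Real.exp (-μ 0 / σ) - Real.exp (-μ i / σ)) *
          ((1 + Real.exp ((x - μ i) / σ)) ^ 2)⁻¹ = 0) ∧
    d (Fin.last s) = 0 := by
  obtain rfl : d = 0 := eq_zero_of_sum_logistic_eq_zero hσ.ne' hμ h
  simp
end
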